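/- Suppose 2 ≤ m ≤ ⌊n/2⌋. Then m(K^1_{n-m,m}, t) ≤ m(K^1_{n-1,1}, t) for all t = 0, 1, …, ⌊n/2⌋. -/

import Mathlib

/-- `matchCount G t` is the number of `t`-matchings of `G`, i.e. the number of
`t`-element sets of pairwise disjoint edges of `G`. -/
noncomputable def matchCount {V : Type*} (G : SimpleGraph V) (t : ℕ) : ℕ :=
  Nat.card {s : Finset (Sym2 V) // ↑s ⊆ G.edgeSet ∧ s.card = t ∧
    (s : Set (Sym2 V)).Pairwise fun e f => ∀ v, ¬(v ∈ e ∧ v ∈ f)}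

/-- The edge connectivity of a graph: the minimum number of edges whose
deletion disconnects the graph. -/
noncomputable def edgeConn {V : Type*} (G : SimpleGraph V) : ℕ :=
  sInf {j | ∃ F : Set (Sym2 V), F ⊆ G.edgeSet ∧ F.ncard = j ∧ ¬(G.deleteEdges F).Connected}

/-- The edge cut `∂(S)`: the set of edges of `G` with exactly one endpoint in `S`. -/
def edgeCut {V : Type*} (G : SimpleGraph V) (S : Set V) : Set (Sym2 V) :=
  {e | e ∈ G.edgeSet ∧ ∃ u ∈ S, ∃ v, v ∉ S ∧ e = s(u, v)}

/-- `Kstar n k` is the graph `K^k_{n-1,1}`: obtained from `K_1 ∪ K_{n-1}` by adding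
`k` edges joining the vertex of `K_1` (vertex `n-1`) to `k` distinct vertices of `K_{n-1}`. -/
def Kstar (n k : ℕ) : SimpleGraph (Fin n) :=
  SimpleGraph.fromRel (fun u v =>
    (u.val < n - 1 ∧ v.val < n - 1) ∨ (u.val < k ∧ v.val = n - 1))

/-- `Kmk n m k` is the graph `K^k_{n-m,m}`: obtained from `K_{n-m} ∪ K_m` by adding
`k` independent edges between the two parts. -/
def Kmk (n m k : ℕ) : SimpleGraph (Fin n) :=
  SimpleGraph.fromRel (fun u v =>
    (u.val < n - m ∧ v.val < n - m) ∨ (n - m ≤ u.val ∧ n - m ≤ v.val) ∨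
    (u.val < k ∧ v.val = n - m + u.val))

/-- The Hosoya index: the total number of matchings of `G`. -/
noncomputable def hosoya {V : Type*} [Fintype V] (G : SimpleGraph V) : ℕ :=
  ∑ t ∈ Finset.range (Fintype.card V / 2 + 1), matchCount G t

/-!
Let `z` be the last vertex and `c = 1`, a vertex of `K_{n-m}` other than the end `0` of the
bridge. Up to relabelling, `K^1_{n-1,1}` is the complete graph on `V ∖ {z}` plus the pendant
edge `cz`. A matching of `K^1_{n-m,m}` that misses `z` is already a matching of this graph. If `z`
is matched to `b`, exchange `z` with the partner `p` of `c` (with `c` itself if `c` is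
unmatched): the edges `cp, bz` become `cz, pb`. The images can be told apart, and the exchanged
vertex read off, because `c` and `z` have no common neighbour and `0` is the only neighbour of `c`
adjacent to a neighbour of `z`.
-/

open Set

section Matchings

variable {V W : Type*} {G : SimpleGraph V} {H : SimpleGraph W} {t : ℕ}

def matchings (G : SimpleGraph V) (t : ℕ) : Set (Finset (Sym2 V)) :=
  {M | ↑M ⊆ G.edgeSet ∧ M.card = t ∧
    (M : Set (Sym2 V)).Pairwise fun e f => ∀ v, ¬(v ∈ e ∧ v ∈ f)}

lemma matchCount_le_of_injOn [Finite W] {f : Finset (Sym2 V) → Finset (Sym2 W)}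
    (hf : MapsTo f (matchings G t) (matchings H t)) (hinj : InjOn f (matchings G t)) :
    matchCount G t ≤ matchCount H t :=
  -- `matchCount G t` is definitionally `(matchings G t).ncard`.
  ncard_le_ncard_of_injOn f hf hinj (toFinite _)

lemma eq_of_mem_of_mem_matchings {M : Finset (Sym2 V)} (hM : M ∈ matchings G t)
    {e f : Sym2 V} (he : e ∈ M) (hf : f ∈ M) {v : V} (hve : v ∈ e) (hvf : v ∈ f) : e = f := by
  by_contra hne
  exact hM.2.2 he hf hne v ⟨hve, hvf⟩

lemma map_sym2Map_mem_matchings (f : V ↪ W) {M : Finset (Sym2 V)} (hM : M ∈ matchings G t)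
    (hH : ∀ e ∈ M, e.map f ∈ H.edgeSet) : M.map f.sym2Map ∈ matchings H t := by
  refine ⟨?_, by rw [Finset.card_map, hM.2.1], ?_⟩
  · intro e' he'
    obtain ⟨e, he, rfl⟩ := Finset.mem_map.1 he'
    exact hH e he
  · rintro _ he' _ hf' hne v ⟨hve, hvf⟩
    obtain ⟨e, he, rfl⟩ := Finset.mem_map.1 he'
    obtain ⟨f', hf, rfl⟩ := Finset.mem_map.1 hf'
    obtain ⟨a, ha, rfl⟩ := Sym2.mem_map.1 hve
    obtain ⟨b, hb, hab⟩ := Sym2.mem_map.1 hvf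
    rw [f.injective hab] at hb
    exact hne (congrArg _ (eq_of_mem_of_mem_matchings hM he hf ha hb))

lemma matchCount_le_of_copy [Finite W] (f : G.Copy H) : matchCount G t ≤ matchCount H t :=
  matchCount_le_of_injOn
    (fun _ hM => map_sym2Map_mem_matchings f.toEmbedding hM
      fun _ he => f.toHom.map_mem_edgeSet (hM.1 he))
    (Finset.map_injective _).injOn

end Matchings

section Switching

variable {V : Type*} {G : SimpleGraph V} {t : ℕ} {c z : V}

def pendantClique (c z : V) : SimpleGraph V :=
  SimpleGraph.fromRel fun u v => (u ≠ z ∧ v ≠ z) ∨ (u = c ∧ v = z)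

lemma mem_edgeSet_pendantClique {e : Sym2 V} :
    e ∈ (pendantClique c z).edgeSet ↔ ¬e.IsDiag ∧ (z ∉ e ∨ e = s(c, z)) := by
  induction e using Sym2.ind with
  | _ u v =>
    simp only [pendantClique, SimpleGraph.mem_edgeSet, SimpleGraph.fromRel_adj,
      Sym2.mk_isDiag_iff, Sym2.mem_iff, Sym2.eq_iff]
    tauto

open Classical in
noncomputable def switchVertex (c z : V) (M : Finset (Sym2 V)) : V :=
  if ∃ b, s(z, b) ∈ M then if h : ∃ p, s(c, p) ∈ M then h.choose else c else z

lemma eq_of_mk_switchVertex_mem {M : Finset (Sym2 V)} (hM : M ∈ matchings G t)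
    {u : V} (hu : s(switchVertex c z M, u) ∈ M) : u = c ∧ switchVertex c z M ≠ c := by
  unfold switchVertex at hu ⊢
  split_ifs at hu ⊢ with hz hc
  · have hcp := hc.choose_spec
    have hne : c ≠ hc.choose := (hM.1 hcp).ne
    have heq := eq_of_mem_of_mem_matchings hM hu hcp (v := hc.choose) (by simp) (by simp)
    rw [Sym2.eq_iff] at heq
    exact ⟨by tauto, hne.symm⟩
  · exact absurd ⟨u, hu⟩ hc
  · exact absurd ⟨u, hu⟩ hz

variable [DecidableEq V]

def swapEdges (q z : V) (M : Finset (Sym2 V)) : Finset (Sym2 V) :=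
  M.map (Equiv.swap q z).toEmbedding.sym2Map

lemma mk_mem_swapEdges {q z u v : V} {M : Finset (Sym2 V)} :
    s(u, v) ∈ swapEdges q z M ↔ s(Equiv.swap q z u, Equiv.swap q z v) ∈ M := by
  simp only [swapEdges, Finset.mem_map]
  constructor
  · rintro ⟨e, he, hev⟩
    induction e using Sym2.ind with
    | _ a b =>
      simp only [Function.Embedding.sym2Map_apply, Equiv.coe_toEmbedding, Sym2.map_mk,
        Sym2.eq_iff] at hev
      rcases hev with ⟨rfl, rfl⟩ | ⟨rfl, rfl⟩ <;> simpa [Sym2.eq_swap] using he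
  · exact fun h => ⟨_, h, by simp⟩

lemma swapEdges_swapEdges (q z : V) (M : Finset (Sym2 V)) :
    swapEdges q z (swapEdges q z M) = M := by
  ext e
  induction e using Sym2.ind with
  | _ u v => simp [mk_mem_swapEdges]

lemma swapEdges_self (z : V) (M : Finset (Sym2 V)) : swapEdges z z M = M := by
  ext e
  induction e using Sym2.ind with
  | _ u v => simp [mk_mem_swapEdges]

noncomputable def switchMatching (c z : V) (M : Finset (Sym2 V)) : Finset (Sym2 V) :=
  swapEdges (switchVertex c z M) z M

lemma switchMatching_mem_matchings (hcz : c ≠ z) {M : Finset (Sym2 V)}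
    (hM : M ∈ matchings G t) : switchMatching c z M ∈ matchings (pendantClique c z) t := by
  refine map_sym2Map_mem_matchings _ hM fun e he => ?_
  induction e using Sym2.ind with
  | _ u v =>
    set q := switchVertex c z M
    have huv : u ≠ v := (hM.1 he).ne
    simp only [Equiv.coe_toEmbedding, Sym2.map_mk, mem_edgeSet_pendantClique,
      Sym2.mk_isDiag_iff, (Equiv.swap q z).injective.eq_iff, huv, not_false_eq_true, true_and]
    by_cases hu : u = q
    · rw [hu] at he ⊢
      obtain ⟨rfl, hqc⟩ := eq_of_mk_switchVertex_mem hM he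
      rw [Equiv.swap_apply_left, Equiv.swap_apply_of_ne_of_ne hqc.symm hcz, Sym2.eq_swap]
      exact Or.inr rfl
    by_cases hv : v = q
    · rw [hv, Sym2.eq_swap] at he
      rw [hv]
      obtain ⟨rfl, hqc⟩ := eq_of_mk_switchVertex_mem hM he
      rw [Equiv.swap_apply_left, Equiv.swap_apply_of_ne_of_ne hqc.symm hcz]
      exact Or.inr rfl
    refine Or.inl fun hz => ?_
    rcases Sym2.mem_iff.1 hz with h | h <;> rw [eq_comm, Equiv.swap_apply_eq_iff,
      Equiv.swap_apply_right] at h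
    exacts [hu h, hv h]

lemma switchMatching_cases (hcz : c ≠ z) (hGcz : ¬G.Adj c z)
    (hdisj : Disjoint (G.neighborSet c) (G.neighborSet z)) {M : Finset (Sym2 V)}
    (hM : M ∈ matchings G t) :
    (switchVertex c z M = z ∧ ↑(switchMatching c z M) ⊆ G.edgeSet) ∨
    (switchVertex c z M = c ∧ ¬↑(switchMatching c z M) ⊆ G.edgeSet ∧
      s(c, z) ∉ switchMatching c z M) ∨
    (s(c, z) ∈ switchMatching c z M ∧ G.Adj c (switchVertex c z M) ∧
      ∃ b, G.Adj z b ∧ s(switchVertex c z M, b) ∈ switchMatching c z M) := by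
  unfold switchMatching switchVertex
  split_ifs with hz hc
  · obtain ⟨b, hb⟩ := hz
    set p := hc.choose
    have hcp : s(c, p) ∈ M := hc.choose_spec
    have hzb : G.Adj z b := hM.1 hb
    have hbp : b ≠ p := by
      rintro rfl
      have := eq_of_mem_of_mem_matchings hM hb hcp (v := p) (by simp) (by simp)
      rw [Sym2.eq_iff] at this
      rcases this with ⟨h, -⟩ | ⟨h, -⟩
      exacts [hcz h.symm, hzb.ne h]
    refine Or.inr (Or.inr ⟨?_, hM.1 hcp, b, hzb, ?_⟩)
    · rw [mk_mem_swapEdges, Equiv.swap_apply_of_ne_of_ne (hM.1 hcp).ne hcz,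
        Equiv.swap_apply_right]
      exact hcp
    · rw [mk_mem_swapEdges, Equiv.swap_apply_left,
        Equiv.swap_apply_of_ne_of_ne hbp hzb.ne.symm]
      exact hb
  · obtain ⟨b, hb⟩ := hz
    have hzb : G.Adj z b := hM.1 hb
    have hcb : s(c, b) ∈ swapEdges c z M := by
      rw [mk_mem_swapEdges, Equiv.swap_apply_left,
        Equiv.swap_apply_of_ne_of_ne (fun hbc : b = c => hGcz (hbc ▸ hzb.symm)) hzb.ne.symm]
      exact hb
    refine Or.inr (Or.inl ⟨rfl, fun hsub => ?_, fun hcz' => ?_⟩)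
    · exact hdisj.ne_of_mem (hsub hcb) hzb rfl
    · rw [mk_mem_swapEdges, Equiv.swap_apply_left, Equiv.swap_apply_right] at hcz'
      exact hGcz (hM.1 hcz').symm
  · rw [swapEdges_self]
    exact Or.inl ⟨rfl, hM.1⟩

lemma adj_of_mk_mem_switchMatching (hGcz : ¬G.Adj c z)
    (hdisj : Disjoint (G.neighborSet c) (G.neighborSet z)) {M : Finset (Sym2 V)}
    (hM : M ∈ matchings G t) (hq : G.Adj c (switchVertex c z M)) {u v : V} (hu : G.Adj c u)
    (hv : G.Adj z v) (huq : u ≠ switchVertex c z M) (h : s(u, v) ∈ switchMatching c z M) :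
    G.Adj u v := by
  have hvq : v ≠ switchVertex c z M := fun hvq => hdisj.ne_of_mem hq hv hvq.symm
  have huz : u ≠ z := fun huz => hGcz (huz ▸ hu)
  rw [switchMatching, mk_mem_swapEdges, Equiv.swap_apply_of_ne_of_ne huq huz,
    Equiv.swap_apply_of_ne_of_ne hvq hv.ne.symm] at h
  exact hM.1 h

lemma switchVertex_eq_of_switchMatching_eq (hcz : c ≠ z) (hGcz : ¬G.Adj c z)
    (hdisj : Disjoint (G.neighborSet c) (G.neighborSet z))
    (huniq : (G.neighborSet c ∩ {u | ∃ v ∈ G.neighborSet z, G.Adj u v}).Subsingleton)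
    {M₁ M₂ : Finset (Sym2 V)} (hM₁ : M₁ ∈ matchings G t) (hM₂ : M₂ ∈ matchings G t)
    (h : switchMatching c z M₁ = switchMatching c z M₂) :
    switchVertex c z M₁ = switchVertex c z M₂ := by
  rcases switchMatching_cases hcz hGcz hdisj hM₁ with
    ⟨hq₁, hG₁⟩ | ⟨hq₁, hG₁, hcz₁⟩ | ⟨hcz₁, hq₁, b₁, hb₁, hp₁⟩ <;>
  rcases switchMatching_cases hcz hGcz hdisj hM₂ with
    ⟨hq₂, hG₂⟩ | ⟨hq₂, hG₂, hcz₂⟩ | ⟨hcz₂, hq₂, b₂, hb₂, hp₂⟩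
  · exact hq₁.trans hq₂.symm
  · exact absurd (h ▸ hG₁) hG₂
  · exact absurd (hG₁ (h ▸ hcz₂)) hGcz
  · exact absurd (h ▸ hG₂) hG₁
  · exact hq₁.trans hq₂.symm
  · exact absurd (h ▸ hcz₂) hcz₁
  · exact absurd (hG₂ (h ▸ hcz₁)) hGcz
  · exact absurd (h ▸ hcz₁) hcz₂
  · -- Two distinct exchanged vertices would be two neighbours of `c` adjacent to neighbours of `z`.
    by_contra hne
    exact hne (huniq
      ⟨hq₁, b₁, hb₁, adj_of_mk_mem_switchMatching hGcz hdisj hM₂ hq₂ hq₁ hb₁ hne (h ▸ hp₁)⟩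
      ⟨hq₂, b₂, hb₂, adj_of_mk_mem_switchMatching hGcz hdisj hM₁ hq₁ hq₂ hb₂ (Ne.symm hne)
        (h ▸ hp₂)⟩)

lemma switchMatching_injOn (hcz : c ≠ z) (hGcz : ¬G.Adj c z)
    (hdisj : Disjoint (G.neighborSet c) (G.neighborSet z))
    (huniq : (G.neighborSet c ∩ {u | ∃ v ∈ G.neighborSet z, G.Adj u v}).Subsingleton) :
    InjOn (switchMatching c z) (matchings G t) := by
  intro M₁ hM₁ M₂ hM₂ h
  calc M₁ = swapEdges (switchVertex c z M₁) z (switchMatching c z M₁) :=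
        (swapEdges_swapEdges _ _ _).symm
    _ = swapEdges (switchVertex c z M₂) z (switchMatching c z M₂) := by
        rw [h, switchVertex_eq_of_switchMatching_eq hcz hGcz hdisj huniq hM₁ hM₂ h]
    _ = M₂ := swapEdges_swapEdges _ _ _

theorem matchCount_le_matchCount_pendantClique [Finite V] (hcz : c ≠ z) (hGcz : ¬G.Adj c z)
    (hdisj : Disjoint (G.neighborSet c) (G.neighborSet z))
    (huniq : (G.neighborSet c ∩ {u | ∃ v ∈ G.neighborSet z, G.Adj u v}).Subsingleton) (t : ℕ) :
    matchCount G t ≤ matchCount (pendantClique c z) t :=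
  matchCount_le_of_injOn (fun _ hM => switchMatching_mem_matchings hcz hM)
    (switchMatching_injOn hcz hGcz hdisj huniq)

lemma matchCount_pendantClique_le [Finite V] {c' : V} (hc : c ≠ z) (hc' : c' ≠ z) (t : ℕ) :
    matchCount (pendantClique c z) t ≤ matchCount (pendantClique c' z) t := by
  have hz : Equiv.swap c c' z = z := Equiv.swap_apply_of_ne_of_ne hc.symm hc'.symm
  refine matchCount_le_of_copy ⟨⟨Equiv.swap c c', fun {u v} huv => ?_⟩, (Equiv.swap c c').injective⟩
  simp only [pendantClique, SimpleGraph.fromRel_adj, ne_eq, (Equiv.swap c c').injective.eq_iff,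
    (Equiv.swap c c').injective.eq_iff' hz] at huv ⊢
  rcases huv with ⟨huv, (⟨hu, hv⟩ | ⟨rfl, rfl⟩) | (⟨hv, hu⟩ | ⟨rfl, rfl⟩)⟩
  · exact ⟨huv, Or.inl (Or.inl ⟨hu, hv⟩)⟩
  · exact ⟨huv, Or.inl (Or.inr ⟨Equiv.swap_apply_left _ _, rfl⟩)⟩
  · exact ⟨huv, Or.inr (Or.inl ⟨hv, hu⟩)⟩
  · exact ⟨huv, Or.inr (Or.inr ⟨Equiv.swap_apply_left _ _, rfl⟩)⟩

end Switching

lemma kstar_one_eq_pendantClique {n : ℕ} (hn : 0 < n) :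
    Kstar n 1 = pendantClique ⟨0, hn⟩ ⟨n - 1, by omega⟩ := by
  ext u v
  simp only [Kstar, pendantClique, SimpleGraph.fromRel_adj, ne_eq, Fin.ext_iff]
  omega

lemma matchCount_kmk_one_le_pendantClique {n m : ℕ} (hm : 2 ≤ m) (hmn : m + m ≤ n) (t : ℕ) :
    matchCount (Kmk n m 1) t ≤
      matchCount (pendantClique (⟨1, by omega⟩ : Fin n) ⟨n - 1, by omega⟩) t := by
  have hadj : ∀ u v : Fin n, (Kmk n m 1).Adj u v ↔ u.val ≠ v.val ∧
      ((u.val < n - m ∧ v.val < n - m) ∨ (n - m ≤ u.val ∧ n - m ≤ v.val) ∨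
        (u.val = 0 ∧ v.val = n - m) ∨ (v.val = 0 ∧ u.val = n - m)) := by
    intro u v
    simp only [Kmk, SimpleGraph.fromRel_adj, ne_eq, Fin.ext_iff]
    omega
  refine matchCount_le_matchCount_pendantClique (Fin.ne_of_val_ne (by dsimp; omega))
    (by rw [hadj]; dsimp; omega) ?_ ?_ t
  · refine Set.disjoint_left.2 fun v h₁ h₂ => ?_
    simp only [SimpleGraph.mem_neighborSet, hadj] at h₁ h₂
    omega
  · rintro u ⟨hu, v, hv, huv⟩ u' ⟨hu', v', hv', huv'⟩
    simp only [SimpleGraph.mem_neighborSet, hadj] at hu hv huv hu' hv' huv'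
    exact Fin.ext (by omega)

/-- For `2 ≤ m ≤ ⌊n/2⌋`: `m(K^1_{n-m,m},t) ≤ m(K^1_{n-1,1},t)` for all `t ≤ ⌊n/2⌋`. -/
theorem stmt14 (n m : ℕ) (hm1 : 2 ≤ m) (hm2 : m ≤ n / 2) :
    ∀ t : ℕ, t ≤ n / 2 → matchCount (Kmk n m 1) t ≤ matchCount (Kstar n 1) t := by
  intro t _
  have hmn : m + m ≤ n := by omega
  rw [kstar_one_eq_pendantClique (by omega)]
  exact (matchCount_kmk_one_le_pendantClique hm1 hmn t).trans
    (matchCount_pendantClique_le (Fin.ne_of_val_ne (by dsimp; omega))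
      (Fin.ne_of_val_ne (by dsimp; omega)) t)
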